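/- Every 3×3 type-II matrix in canonical form is equal either to the 3×3 Fourier matrix F₃ (with entries (F₃)_{j,k} = ζ₃^{jk}/√3) or to its entrywise complex conjugate. Consequently, every 3×3 Hermitian matrix that is unitarily diagonalized by a type-II matrix in canonical form (A = XΛX* with Λ real diagonal) is a circulant matrix. -/

import Mathlib

open Matrix Complex

/-- The circulant matrix `Circ(a₀,a₁,a₂)`, with `C_{j,k} = a_{k-j}`. -/
def Circ (a : ZMod 3 → ℂ) : Matrix (ZMod 3) (ZMod 3) ℂ :=
  fun j k => a (k - j)

/-- The 3×3 Fourier matrix, `(F₃)_{j,k} = ζ₃^{jk}/√3`. -/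
noncomputable def F3 : Matrix (ZMod 3) (ZMod 3) ℂ :=
  fun j k => Complex.exp (2 * Real.pi * Complex.I * (j.val * k.val) / 3) / Real.sqrt 3

/-- `M` is a 3×3 type-II matrix in canonical form: a flat unitary with all entries
of modulus `1/√3` whose first row and column consist of the entries `1/√3`. -/
def IsCanonicalTypeII (M : Matrix (ZMod 3) (ZMod 3) ℂ) : Prop :=
  M * Mᴴ = 1 ∧
  (∀ j k : ZMod 3, ‖M j k‖ = 1 / Real.sqrt 3) ∧
  (∀ k : ZMod 3, M 0 k = ((1 / Real.sqrt 3 : ℝ) : ℂ)) ∧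
  (∀ j : ZMod 3, M j 0 = ((1 / Real.sqrt 3 : ℝ) : ℂ))

noncomputable def zeta : ℂ := ⟨-1/2, Real.sqrt 3 / 2⟩

noncomputable def chi (n : ZMod 3) : ℂ := zeta ^ n.val

lemma r_sq : (Real.sqrt 3) ^ 2 = 3 := Real.sq_sqrt (by norm_num)

lemma r_ne : (Real.sqrt 3 : ℝ) ≠ 0 := ne_of_gt (Real.sqrt_pos.2 (by norm_num))

lemma hr2 : ((Real.sqrt 3 : ℝ):ℂ) * ((Real.sqrt 3 : ℝ):ℂ) = 3 := by
  rw [← Complex.ofReal_mul, Real.mul_self_sqrt (by norm_num)]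
  norm_num

lemma exp_third : Complex.exp (2*Real.pi*Complex.I*1/3) = zeta := by
  have h : (2*Real.pi*Complex.I*1/3 : ℂ) = ((2*Real.pi/3 : ℝ) : ℂ) * Complex.I := by
    push_cast; ring
  have hc : Real.cos (2*Real.pi/3) = -(1/2) := by
    rw [show (2*Real.pi/3 : ℝ) = Real.pi - Real.pi/3 by ring, Real.cos_pi_sub,
      Real.cos_pi_div_three]
  have hs : Real.sin (2*Real.pi/3) = Real.sqrt 3/2 := by
    rw [show (2*Real.pi/3 : ℝ) = Real.pi - Real.pi/3 by ring, Real.sin_pi_sub,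
      Real.sin_pi_div_three]
  rw [h, Complex.exp_mul_I, ← Complex.ofReal_cos, ← Complex.ofReal_sin, hc, hs]
  apply Complex.ext
  · simp [zeta]; norm_num
  · simp [zeta]

lemma zeta_cube : zeta ^ 3 = 1 := by
  rw [← exp_third, ← Complex.exp_nat_mul,
    show ((3:ℕ):ℂ) * (2*Real.pi*Complex.I*1/3) = 2*Real.pi*Complex.I by push_cast; ring,
    Complex.exp_two_pi_mul_I]

lemma zeta_pow_mod (m : ℕ) : zeta ^ (m % 3) = zeta ^ m := by
  conv_rhs => rw [← Nat.div_add_mod m 3]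
  rw [pow_add, pow_mul, zeta_cube, one_pow, one_mul]

lemma chi_mul (a b : ZMod 3) : chi (a + b) = chi a * chi b := by
  unfold chi
  rw [ZMod.val_add, zeta_pow_mod, pow_add]

lemma chi_zero : chi 0 = 1 := pow_zero _

lemma chi_one : chi 1 = zeta := pow_one _

lemma chi_two : chi 2 = zeta ^ 2 := rfl

lemma normSq_zeta : Complex.normSq zeta = 1 := by
  have h := r_sq
  simp only [Complex.normSq_apply, zeta]
  nlinarith [h]

lemma zeta_sq : zeta ^ 2 = ⟨-1/2, -(Real.sqrt 3/2)⟩ := by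
  have h := r_sq
  rw [pow_two]
  apply Complex.ext <;> simp [zeta, Complex.mul_re, Complex.mul_im] <;> nlinarith [h]

lemma conj_zeta : (starRingEnd ℂ) zeta = zeta ^ 2 := by
  rw [zeta_sq]
  apply Complex.ext <;> simp [zeta]

lemma chi_conj (a : ZMod 3) : (starRingEnd ℂ) (chi a) = chi (-a) := by
  have h1 : (starRingEnd ℂ) (chi a) * chi a = 1 := by
    rw [mul_comm, Complex.mul_conj]
    simp [chi, map_pow, normSq_zeta]
  have h2 : chi (-a) * chi a = 1 := by
    rw [← chi_mul, neg_add_cancel, chi_zero]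
  have hne : chi a ≠ 0 := by
    intro h
    rw [h, mul_zero] at h2
    exact one_ne_zero h2.symm
  exact mul_right_cancel₀ hne (h1.trans h2.symm)

lemma F3_apply (j k : ZMod 3) : F3 j k = chi (j * k) / (Real.sqrt 3 : ℂ) := by
  unfold F3 chi
  congr 1
  have h : (2*Real.pi*Complex.I*((j.val:ℂ) * (k.val:ℂ))/3)
      = ((j.val * k.val : ℕ) : ℂ) * (2*Real.pi*Complex.I*1/3) := by push_cast; ring
  rw [h, Complex.exp_nat_mul, exp_third, ZMod.val_mul, zeta_pow_mod]

lemma eq_zeta_div (z : ℂ) (h1 : z.re = -(Real.sqrt 3/6)) (h2 : z.im = 1/2) :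
    z = zeta / (Real.sqrt 3 : ℂ) := by
  have hr := r_sq
  have hne := r_ne
  apply Complex.ext
  · rw [Complex.div_ofReal_re, h1]
    show -(Real.sqrt 3/6) = (-1/2 : ℝ) / Real.sqrt 3
    field_simp
    nlinarith [hr]
  · rw [Complex.div_ofReal_im, h2]
    show (1/2 : ℝ) = (Real.sqrt 3 / 2) / Real.sqrt 3
    field_simp

lemma eq_zeta_sq_div (z : ℂ) (h1 : z.re = -(Real.sqrt 3/6)) (h2 : z.im = -(1/2)) :
    z = zeta ^ 2 / (Real.sqrt 3 : ℂ) := by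
  have hr := r_sq
  have hne := r_ne
  rw [zeta_sq]
  apply Complex.ext
  · rw [Complex.div_ofReal_re, h1]
    show -(Real.sqrt 3/6) = (-1/2 : ℝ) / Real.sqrt 3
    field_simp
    nlinarith [hr]
  · rw [Complex.div_ofReal_im, h2]
    show -(1/2 : ℝ) = -(Real.sqrt 3 / 2) / Real.sqrt 3
    field_simp

lemma key (z w : ℂ) (hz : ‖z‖ = 1/Real.sqrt 3) (hw : ‖w‖ = 1/Real.sqrt 3)
    (hsum : ((1/Real.sqrt 3 : ℝ) : ℂ) + z + w = 0) :
    (z = zeta / (Real.sqrt 3:ℂ) ∧ w = zeta^2 / (Real.sqrt 3:ℂ)) ∨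
    (z = zeta^2 / (Real.sqrt 3:ℂ) ∧ w = zeta / (Real.sqrt 3:ℂ)) := by
  have hr := r_sq
  have hne := r_ne
  have h13 : (1/Real.sqrt 3 : ℝ)^2 = 1/3 := by
    rw [div_pow, hr]; norm_num
  have hz2 : z.re^2 + z.im^2 = 1/3 := by
    have h := Complex.sq_norm z
    rw [hz, Complex.normSq_apply, h13] at h
    nlinarith [h]
  have hw2 : w.re^2 + w.im^2 = 1/3 := by
    have h := Complex.sq_norm w
    rw [hw, Complex.normSq_apply, h13] at h
    nlinarith [h]
  have hre : 1/Real.sqrt 3 + z.re + w.re = 0 := by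
    have h := congrArg Complex.re hsum
    simp only [Complex.add_re, Complex.ofReal_re, Complex.zero_re] at h
    exact h
  have him : z.im + w.im = 0 := by
    have h := congrArg Complex.im hsum
    simp only [Complex.add_im, Complex.ofReal_im, Complex.zero_im, zero_add] at h
    exact h
  have hs3 : (1/Real.sqrt 3 : ℝ) = Real.sqrt 3 / 3 := by
    rw [div_eq_div_iff hne (by norm_num : (3:ℝ) ≠ 0)]
    nlinarith [hr]
  have hwre : w.re = -(Real.sqrt 3/3) - z.re := by
    rw [hs3] at hre; linarith
  have hwim : w.im = -z.im := by linarith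
  rw [hwre, hwim] at hw2
  have hzre : z.re = -(Real.sqrt 3/6) := by
    nlinarith [hz2, hw2, hr]
  have hwre' : w.re = -(Real.sqrt 3/6) := by
    rw [hwre, hzre]; ring
  have him2 : z.im^2 = 1/4 := by
    rw [hzre] at hz2
    nlinarith [hz2, hr]
  have him4 : (z.im - 1/2) * (z.im + 1/2) = 0 := by linear_combination him2
  rcases mul_eq_zero.1 him4 with h | h
  · left
    have hzim : z.im = 1/2 := by linarith
    exact ⟨eq_zeta_div z hzre hzim, eq_zeta_sq_div w hwre' (by rw [hwim, hzim])⟩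
  · right
    have hzim : z.im = -(1/2) := by linarith
    refine ⟨eq_zeta_sq_div z hzre hzim, eq_zeta_div w hwre' ?_⟩
    rw [hwim, hzim]; norm_num

lemma zmod3_cases (j : ZMod 3) : j = 0 ∨ j = 1 ∨ j = 2 := by
  revert j; decide

lemma zmod3_sum (f : ZMod 3 → ℂ) : ∑ i, f i = f 0 + f 1 + f 2 :=
  Fin.sum_univ_three f

lemma circ_aux (ψ : ZMod 3 → ℂ) (hmul : ∀ a b, ψ (a + b) = ψ a * ψ b)
    (hconj : ∀ a, (starRingEnd ℂ) (ψ a) = ψ (-a))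
    (X : Matrix (ZMod 3) (ZMod 3) ℂ)
    (hX : ∀ j k, X j k = ψ (j * k) / ((Real.sqrt 3 : ℝ) : ℂ)) (μ : ZMod 3 → ℝ) :
    ∃ a : ZMod 3 → ℂ, X * Matrix.diagonal (fun k => (μ k : ℂ)) * Xᴴ = Circ a := by
  refine ⟨fun d => ∑ m : ZMod 3, ψ ((-d) * m) * (μ m : ℂ) / 3, ?_⟩
  ext j k
  show ∑ m : ZMod 3, (X * Matrix.diagonal (fun k => (μ k : ℂ))) j m * Xᴴ m k
      = ∑ m : ZMod 3, ψ ((-(k - j)) * m) * (μ m : ℂ) / 3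
  apply Finset.sum_congr rfl
  intro m _
  rw [Matrix.mul_diagonal, Matrix.conjTranspose_apply, hX, hX]
  have h1 : (star (ψ (k * m) / ((Real.sqrt 3 : ℝ):ℂ)) : ℂ)
      = ψ (-(k * m)) / ((Real.sqrt 3 : ℝ):ℂ) := by
    rw [Complex.star_def, map_div₀, hconj, Complex.conj_ofReal]
  rw [h1]
  have h2 : ψ ((-(k - j)) * m) = ψ (j * m) * ψ (-(k * m)) := by
    rw [← hmul]; congr 1; ring
  rw [h2]
  have hne := r_ne
  field_simp
  rw [mul_comm m k]
  linear_combination (-ψ (j * m) * ψ (-(k * m)) * (μ m : ℂ)) * hr2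

/-- Every 3×3 type-II matrix in canonical form equals the Fourier matrix `F₃` or
its entrywise complex conjugate.  Consequently, every 3×3 Hermitian matrix that is
unitarily diagonalized by a canonical type-II matrix is a circulant. -/
theorem stmt_19 :
    (∀ M : Matrix (ZMod 3) (ZMod 3) ℂ, IsCanonicalTypeII M →
      M = F3 ∨ M = fun j k => (starRingEnd ℂ) (F3 j k)) ∧
    (∀ (A X : Matrix (ZMod 3) (ZMod 3) ℂ) (μ : ZMod 3 → ℝ),
      A.IsHermitian → IsCanonicalTypeII X →
      A = X * Matrix.diagonal (fun k => (μ k : ℂ)) * Xᴴ →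
      ∃ a : ZMod 3 → ℂ, A = Circ a) := by
  have part1 : ∀ M : Matrix (ZMod 3) (ZMod 3) ℂ, IsCanonicalTypeII M →
      M = F3 ∨ M = fun j k => (starRingEnd ℂ) (F3 j k) := by
    intro M hM
    obtain ⟨hU, habs, hrow, hcol⟩ := hM
    have hsne : ((1/Real.sqrt 3 : ℝ):ℂ) ≠ 0 := by
      simp [r_ne]
    have hsum1 : ((1/Real.sqrt 3 : ℝ):ℂ) + M 1 1 + M 1 2 = 0 := by
      have h := congrFun (congrFun hU 1) 0
      rw [Matrix.mul_apply, zmod3_sum, Matrix.one_apply_ne (by decide)] at h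
      simp only [Matrix.conjTranspose_apply, Complex.star_def, hrow, Complex.conj_ofReal,
        hcol] at h
      have h' : (((1/Real.sqrt 3 : ℝ):ℂ) + M 1 1 + M 1 2) * ((1/Real.sqrt 3 : ℝ):ℂ) = 0 := by
        linear_combination h
      rcases mul_eq_zero.1 h' with h'' | h''
      · exact h''
      · exact absurd h'' hsne
    have hsum2 : ((1/Real.sqrt 3 : ℝ):ℂ) + M 2 1 + M 2 2 = 0 := by
      have h := congrFun (congrFun hU 2) 0
      rw [Matrix.mul_apply, zmod3_sum, Matrix.one_apply_ne (by decide)] at h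
      simp only [Matrix.conjTranspose_apply, Complex.star_def, hrow, Complex.conj_ofReal,
        hcol] at h
      have h' : (((1/Real.sqrt 3 : ℝ):ℂ) + M 2 1 + M 2 2) * ((1/Real.sqrt 3 : ℝ):ℂ) = 0 := by
        linear_combination h
      rcases mul_eq_zero.1 h' with h'' | h''
      · exact h''
      · exact absurd h'' hsne
    have hortho : M 1 0 * (starRingEnd ℂ) (M 2 0) + M 1 1 * (starRingEnd ℂ) (M 2 1)
        + M 1 2 * (starRingEnd ℂ) (M 2 2) = 0 := by
      have h := congrFun (congrFun hU 1) 2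
      rw [Matrix.mul_apply, zmod3_sum, Matrix.one_apply_ne (by decide)] at h
      simpa only [Matrix.conjTranspose_apply, Complex.star_def] using h
    have h11 := key (M 1 1) (M 1 2) (habs 1 1) (habs 1 2) hsum1
    have h22 := key (M 2 1) (M 2 2) (habs 2 1) (habs 2 2) hsum2
    have hzz : zeta * (starRingEnd ℂ) zeta = 1 := by
      rw [Complex.mul_conj, normSq_zeta]; norm_num
    have hz2z2 : zeta^2 * (starRingEnd ℂ) (zeta^2) = 1 := by
      rw [Complex.mul_conj, map_pow, normSq_zeta]; norm_num
    have hs2 : ((1/Real.sqrt 3 : ℝ):ℂ) * (starRingEnd ℂ) ((1/Real.sqrt 3 : ℝ):ℂ) = 1/3 := by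
      rw [Complex.conj_ofReal, ← Complex.ofReal_mul]
      rw [show (1/Real.sqrt 3 * (1/Real.sqrt 3) : ℝ) = 1/3 by
        rw [div_mul_div_comm, one_mul, ← pow_two, r_sq]]
      norm_num
    have hd1 : zeta / ((Real.sqrt 3:ℝ):ℂ) * (starRingEnd ℂ) (zeta / ((Real.sqrt 3:ℝ):ℂ))
        = 1/3 := by
      rw [map_div₀, Complex.conj_ofReal, div_mul_div_comm, hzz, hr2]
    have hd2 : zeta^2 / ((Real.sqrt 3:ℝ):ℂ)
        * (starRingEnd ℂ) (zeta^2 / ((Real.sqrt 3:ℝ):ℂ)) = 1/3 := by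
      rw [map_div₀, Complex.conj_ofReal, div_mul_div_comm, hz2z2, hr2]
    have hcol1 : M 1 0 = ((1/Real.sqrt 3 : ℝ):ℂ) := hcol 1
    have hcol2 : M 2 0 = ((1/Real.sqrt 3 : ℝ):ℂ) := hcol 2
    rcases h11 with ⟨ha, hb⟩ | ⟨ha, hb⟩ <;> rcases h22 with ⟨hc, hd⟩ | ⟨hc, hd⟩
    · -- contradiction: rows 1 and 2 equal
      exfalso
      rw [hcol1, hcol2, ha, hb, hc, hd, hs2, hd1, hd2] at hortho
      norm_num at hortho
    · -- M = F3
      left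
      ext j k
      rcases zmod3_cases j with rfl | rfl | rfl <;> rcases zmod3_cases k with rfl | rfl | rfl
      · rw [hrow, F3_apply, show ((0:ZMod 3) * 0) = 0 from rfl, chi_zero]; push_cast; ring
      · rw [hrow, F3_apply, show ((0:ZMod 3) * 1) = 0 from rfl, chi_zero]; push_cast; ring
      · rw [hrow, F3_apply, show ((0:ZMod 3) * 2) = 0 from rfl, chi_zero]; push_cast; ring
      · rw [hcol, F3_apply, show ((1:ZMod 3) * 0) = 0 from rfl, chi_zero]; push_cast; ring
      · rw [ha, F3_apply, show ((1:ZMod 3) * 1) = 1 from rfl, chi_one]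
      · rw [hb, F3_apply, show ((1:ZMod 3) * 2) = 2 from rfl, chi_two]
      · rw [hcol, F3_apply, show ((2:ZMod 3) * 0) = 0 from rfl, chi_zero]; push_cast; ring
      · rw [hc, F3_apply, show ((2:ZMod 3) * 1) = 2 from rfl, chi_two]
      · rw [hd, F3_apply, show ((2:ZMod 3) * 2) = 1 from rfl, chi_one]
    · -- M = conj F3
      right
      funext j k
      show M j k = (starRingEnd ℂ) (F3 j k)
      rcases zmod3_cases j with rfl | rfl | rfl <;> rcases zmod3_cases k with rfl | rfl | rfl <;>
        rw [F3_apply, map_div₀, Complex.conj_ofReal, chi_conj]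
      · rw [hrow, show (-((0:ZMod 3) * 0)) = 0 from rfl, chi_zero]; push_cast; ring
      · rw [hrow, show (-((0:ZMod 3) * 1)) = 0 from rfl, chi_zero]; push_cast; ring
      · rw [hrow, show (-((0:ZMod 3) * 2)) = 0 from rfl, chi_zero]; push_cast; ring
      · rw [hcol, show (-((1:ZMod 3) * 0)) = 0 from rfl, chi_zero]; push_cast; ring
      · rw [ha, show (-((1:ZMod 3) * 1)) = 2 from rfl, chi_two]
      · rw [hb, show (-((1:ZMod 3) * 2)) = 1 from rfl, chi_one]
      · rw [hcol, show (-((2:ZMod 3) * 0)) = 0 from rfl, chi_zero]; push_cast; ring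
      · rw [hc, show (-((2:ZMod 3) * 1)) = 1 from rfl, chi_one]
      · rw [hd, show (-((2:ZMod 3) * 2)) = 2 from rfl, chi_two]
    · -- contradiction
      exfalso
      rw [hcol1, hcol2, ha, hb, hc, hd, hs2, hd1, hd2] at hortho
      norm_num at hortho
  refine ⟨part1, ?_⟩
  intro A X μ hA hX2 hAeq
  rcases part1 X hX2 with rfl | rfl
  · obtain ⟨a, ha⟩ := circ_aux chi chi_mul chi_conj F3 (fun j k => F3_apply j k) μ
    exact ⟨a, hAeq.trans ha⟩
  · obtain ⟨a, ha⟩ := circ_aux (fun n => chi (-n))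
      (by intro a b; show chi (-(a+b)) = _; rw [neg_add, chi_mul])
      (fun a => chi_conj (-a))
      (fun j k => (starRingEnd ℂ) (F3 j k))
      (fun j k => by
        show (starRingEnd ℂ) (F3 j k) = _
        rw [F3_apply, map_div₀, Complex.conj_ofReal, chi_conj]) μ
    exact ⟨a, hAeq.trans ha⟩
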